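/- arXiv:2605.28419 — 3 statements merged into one kernel-verified Lean document; each statement's English description precedes it below -/
import Mathlib

section
/- If λ is an infinite cardinal, A and B are subsets of the ordinals each of order type λ, and A and B are mutually cofinal (every element of A is below some element of B and vice versa), then A ∪ B has order type λ. -/
universe u

open Ordinal Set Cardinal

/-- The order type of a set of ordinals (as a subset with the induced order). -/
noncomputable def otype (A : Set Ordinal.{u}) : Ordinal.{u+1} :=
  Ordinal.type ((· < ·) : A → A → Prop)

lemma otype_mono {S T : Set Ordinal.{u}} (h : S ⊆ T) : otype S ≤ otype T := by
  rw [otype, otype, Ordinal.type_le_iff']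
  exact ⟨⟨⟨Set.inclusion h, Set.inclusion_injective h⟩, Iff.rfl⟩⟩

lemma otype_sep_lt {S : Set Ordinal.{u}} {a : Ordinal.{u}} (ha : a ∈ S) :
    otype {z ∈ S | z < a} < otype S := by
  have key : otype {z ∈ S | z < a} =
      Ordinal.typein ((· < ·) : S → S → Prop) ⟨a, ha⟩ := by
    rw [← Ordinal.type_subrel, otype, Ordinal.type_eq]
    exact ⟨⟨⟨fun z => ⟨⟨z.1, z.2.1⟩, z.2.2⟩, fun b => ⟨b.1.1, b.1.2, b.2⟩,
      fun z => rfl, fun b => rfl⟩, Iff.rfl⟩⟩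
  rw [key]
  exact Ordinal.typein_lt_type _ _

lemma card_otype (S : Set Ordinal.{u}) : (otype S).card = #S :=
  Ordinal.card_type _

/-- If `λ` is an infinite cardinal and `A`, `B` are sets of ordinals, each of order type
`λ` (as an ordinal), which are mutually cofinal, then `A ∪ B` has order type `λ`. -/
theorem union_mutually_cofinal_otype (lam : Cardinal.{u}) (hlam : ℵ₀ ≤ lam)
    (A B : Set Ordinal.{u})
    (hA : otype A = Ordinal.lift.{u+1, u} lam.ord)
    (hB : otype B = Ordinal.lift.{u+1, u} lam.ord)
    (hAB : ∀ a ∈ A, ∃ b ∈ B, a ≤ b)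
    (hBA : ∀ b ∈ B, ∃ a ∈ A, b ≤ a) :
    otype (A ∪ B) = Ordinal.lift.{u+1, u} lam.ord := by
  have hge : Ordinal.lift.{u+1, u} lam.ord ≤ otype (A ∪ B) :=
    hA ▸ otype_mono Set.subset_union_left
  refine le_antisymm ?_ hge
  by_contra hlt
  push_neg at hlt
  obtain ⟨x, hx⟩ := Ordinal.typein_surj
    ((· < ·) : (A ∪ B : Set Ordinal.{u}) → (A ∪ B : Set Ordinal.{u}) → Prop) hlt
  obtain ⟨a', ha', hxa⟩ : ∃ a' ∈ A, x.1 ≤ a' := by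
    rcases x.2 with h | h
    · exact ⟨x.1, h, le_rfl⟩
    · exact hBA _ h
  obtain ⟨b', hb', hxb⟩ : ∃ b' ∈ B, x.1 ≤ b' := by
    rcases x.2 with h | h
    · exact hAB _ h
    · exact ⟨x.1, h, le_rfl⟩
  set p1 : Set Ordinal.{u} := {z ∈ A | z < a'}
  set p2 : Set Ordinal.{u} := {z ∈ B | z < b'}
  have hcard1 : #↥p1 < Cardinal.lift.{u+1, u} lam := by
    rw [← card_otype]
    rw [Cardinal.lt_ord.symm, ← Cardinal.lift_ord, ← hA]
    exact otype_sep_lt ha'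
  have hcard2 : #↥p2 < Cardinal.lift.{u+1, u} lam := by
    rw [← card_otype]
    rw [Cardinal.lt_ord.symm, ← Cardinal.lift_ord, ← hB]
    exact otype_sep_lt hb'
  have hseg : Cardinal.lift.{u+1, u} lam ≤ #{y : ↥(A ∪ B) // y < x} := by
    have h1 : #{y : ↥(A ∪ B) // y < x} =
        (Ordinal.typein ((· < ·) : (A ∪ B : Set Ordinal.{u}) → _ → Prop) x).card :=
      Ordinal.card_typein x
    rw [h1, hx, Cardinal.lift_ord, Cardinal.card_ord]
  have hsub : #{y : ↥(A ∪ B) // y < x} ≤ #↥(p1 ∪ p2) := by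
    refine ⟨⟨fun y => ⟨y.1.1, ?_⟩, ?_⟩⟩
    · have hyx : y.1.1 < x.1 := y.2
      rcases y.1.2 with h | h
      · exact Or.inl ⟨h, lt_of_lt_of_le hyx hxa⟩
      · exact Or.inr ⟨h, lt_of_lt_of_le hyx hxb⟩
    · intro y z h
      simp only [Subtype.mk.injEq] at h
      exact Subtype.ext (Subtype.ext h)
  have hunion : #↥(p1 ∪ p2) ≤ #↥p1 + #↥p2 := Cardinal.mk_union_le _ _
  have : Cardinal.lift.{u+1, u} lam < Cardinal.lift.{u+1, u} lam :=
    lt_of_le_of_lt (hseg.trans (hsub.trans hunion))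
      (Cardinal.add_lt_of_lt (Cardinal.aleph0_le_lift.mpr hlam) hcard1 hcard2)
  exact absurd this (lt_irrefl _)
end

section
/- Every partial ordinal semigroup in which the product of every sequence indexed by an ordinal ≤ γ is defined (γ an infinite ordinal) admits at most one extension of its product to all sequences indexed by ordinals of cardinality ≤ |γ|, subject to the generalized associativity axiom (Ord) and the unary axiom (U). Uniqueness part: any two such extensions agree on all sequences indexed by any ordinal δ with |δ| = |γ|. -/
universe u

open Ordinal Cardinal

/-- `π : δ → η` is a surjective order-preserving map between the ordinals `δ` and `η`
whose fiber over each `j < η` is the (nonempty) interval `[β j, β j + ε j)`. -/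
def IsFiberDecomp (δ η : Ordinal.{u}) (π β ε : Ordinal.{u} → Ordinal.{u}) : Prop :=
  (∀ i < δ, π i < η) ∧
  (∀ i < δ, ∀ i' < δ, i ≤ i' → π i ≤ π i') ∧
  (∀ j < η, ∃ i < δ, π i = j) ∧
  (∀ j < η, ∀ i : Ordinal.{u}, (i < δ ∧ π i = j) ↔ (β j ≤ i ∧ i < β j + ε j))

/-- A partial ordinal semigroup: a partial product (`none` = undefined) on
ordinal-indexed sequences (a sequence indexed by `δ` is represented by a total function,
and the product only depends on the values at indices `< δ`), satisfying axiom (U)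
(singleton products) and axiom (Ord) (generalized associativity: whenever the product of
`(a i)_{i<δ}` is defined and `π : δ → η` is a surjective order-preserving map with
interval fibers `[β j, β j + ε j)`, all the fiber products and the `η`-indexed product of
the fiber products are defined, and the latter equals the product over `δ`). -/
structure PartialOrdinalSemigroup (S : Type u) : Type (u + 1) where
  prod : Ordinal.{u} → (Ordinal.{u} → S) → Option S
  congr : ∀ δ a b, (∀ i < δ, a i = b i) → prod δ a = prod δ b
  unary : ∀ a, prod 1 a = some (a 0)
  ord : ∀ δ η (a : Ordinal.{u} → S) (π β ε : Ordinal.{u} → Ordinal.{u}) (s : S),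
    IsFiberDecomp δ η π β ε → prod δ a = some s →
    ∃ b : Ordinal.{u} → S,
      (∀ j < η, prod (ε j) (fun γ => a (β j + γ)) = some (b j)) ∧
      prod η b = some s

/-- The product of `P` is defined exactly on sequences whose index ordinal satisfies `D`. -/
def DomExactly {S : Type u} (P : PartialOrdinalSemigroup S)
    (D : Ordinal.{u} → Prop) : Prop :=
  ∀ δ a, (P.prod δ a).isSome ↔ D δ

/-- `Q` extends `P`: every product defined in `P` is defined in `Q` with the same value. -/
def Extends {S : Type u} (Q P : PartialOrdinalSemigroup S) : Prop :=
  ∀ δ a s, P.prod δ a = some s → Q.prod δ a = some s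

/-! Induction on `δ`. For `δ ≤ γ` both products are the one of `P`. Otherwise
`|δ| ≤ |γ|` gives `|δ|.ord ≤ γ < δ`, so `δ` is not an initial ordinal and splits into fewer
than `δ` consecutive blocks, each shorter than `δ`: a successor `δ₀ + 1` as `δ₀` followed by a
point, a limit along a fundamental sequence of length `cof δ`. By (Ord) both products over `δ`
are then the product of the block products, which agree by induction. -/

section FiberDecomp

variable {δ η : Ordinal.{u}} {π β ε : Ordinal.{u} → Ordinal.{u}}

/-- The fibers of a monotone map are convex, so the interval condition of `IsFiberDecomp` is
automatic. -/
theorem exists_isFiberDecomp_of_monotone (hmaps : ∀ i < δ, π i < η)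
    (hmono : ∀ i < δ, ∀ i' < δ, i ≤ i' → π i ≤ π i') (hsurj : ∀ j < η, ∃ i < δ, π i = j) :
    ∃ β ε, IsFiberDecomp δ η π β ε := by
  refine ⟨fun j => sInf {i | i < δ ∧ j ≤ π i},
    fun j => sInf {i | i < δ → j < π i} - sInf {i | i < δ ∧ j ≤ π i},
    hmaps, hmono, hsurj, fun j hj i => ?_⟩
  set b := sInf {i | i < δ ∧ j ≤ π i}
  -- `e` is the first index past the fiber over `j`, or `δ` if there is none
  set e := sInf {i | i < δ → j < π i}
  have hb : b < δ ∧ j ≤ π b := by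
    obtain ⟨i, hi, hij⟩ := hsurj j hj
    exact csInf_mem (s := {i | i < δ ∧ j ≤ π i}) ⟨i, hi, hij.ge⟩
  have he : e < δ → j < π e :=
    csInf_mem (s := {i | i < δ → j < π i}) ⟨δ, fun h => (lt_irrefl δ h).elim⟩
  have heδ : e ≤ δ := csInf_le' fun h => (lt_irrefl δ h).elim
  have hbe : b ≤ e := by
    by_contra! heb
    exact heb.not_ge (csInf_le' ⟨heb.trans hb.1, (he (heb.trans hb.1)).le⟩)
  dsimp only
  rw [Ordinal.add_sub_cancel_of_le hbe]
  constructor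
  · rintro ⟨hi, rfl⟩
    refine ⟨csInf_le' ⟨hi, le_rfl⟩, ?_⟩
    by_contra! hei
    exact (he (hei.trans_lt hi)).not_ge (hmono _ (hei.trans_lt hi) _ hi hei)
  · rintro ⟨hbi, hie⟩
    have hi : i < δ := hie.trans_le heδ
    refine ⟨hi, le_antisymm ?_ (hb.2.trans (hmono _ hb.1 _ hi hbi))⟩
    by_contra! hji
    exact hie.not_ge (csInf_le' fun _ => hji)

theorem IsFiberDecomp.length_le (h : IsFiberDecomp δ η π β ε) {j a b : Ordinal.{u}} (hj : j < η)
    (hfib : ∀ i < δ, π i = j → a ≤ i ∧ i < b) : ε j ≤ b - a := by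
  have hiff := h.2.2.2 j hj
  obtain ⟨i, hi, hπi⟩ := h.2.2.1 j hj
  obtain ⟨hβi, hiε⟩ := (hiff i).1 ⟨hi, hπi⟩
  obtain ⟨hβδ, hπβ⟩ := (hiff (β j)).2 ⟨le_rfl, hβi.trans_lt hiε⟩
  have hend : β j + ε j ≤ b := by
    by_contra! hb
    obtain ⟨hbδ, hπb⟩ := (hiff b).2 ⟨(hfib _ hβδ hπβ).2.le, hb⟩
    exact (hfib b hbδ hπb).2.false
  exact Ordinal.le_sub_of_add_le ((add_le_add_left (hfib _ hβδ hπβ).1 _).trans hend)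

end FiberDecomp

theorem Ordinal.eq_zero_or_eq_one_of_lt_two {j : Ordinal.{u}} (hj : j < 2) : j = 0 ∨ j = 1 := by
  obtain ⟨n, rfl⟩ := lt_omega0.1 (hj.trans (natCast_lt_omega0 2))
  have : n < 2 := by exact_mod_cast hj
  interval_cases n <;> simp

theorem exists_isFiberDecomp_add {α ρ : Ordinal.{u}} (hα : 0 < α) (hρ : 0 < ρ) :
    ∃ π β ε, IsFiberDecomp (α + ρ) 2 π β ε ∧ ε 0 ≤ α ∧ ε 1 ≤ ρ := by
  set π : Ordinal.{u} → Ordinal.{u} := fun i => if i < α then 0 else 1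
  obtain ⟨β, ε, h⟩ := exists_isFiberDecomp_of_monotone (δ := α + ρ) (η := 2) (π := π)
    (fun i _ => by simp only [π]; split_ifs <;> norm_num)
    (fun i _ i' _ hii' => by
      simp only [π]; split_ifs <;> first | exact absurd (hii'.trans_lt ‹i' < α›) ‹¬i < α› | simp)
    (fun j hj => by
      rcases Ordinal.eq_zero_or_eq_one_of_lt_two hj with rfl | rfl
      · exact ⟨0, hα.trans_le le_self_add, if_pos hα⟩
      · exact ⟨α, lt_add_of_pos_right α hρ, if_neg (lt_irrefl α)⟩)
  refine ⟨π, β, ε, h, ?_, ?_⟩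
  · simpa using h.length_le (j := 0) (a := 0) (b := α) (by norm_num) fun i _ hπi => by
      by_contra! hi
      simp [π, not_lt.2 (hi zero_le)] at hπi
  · simpa using h.length_le (j := 1) (a := α) (b := α + ρ) one_lt_two fun i hi hπi => by
      refine ⟨not_lt.1 fun hiα => ?_, hi⟩
      simp [π, hiα] at hπi

theorem exists_isFiberDecomp_cof {δ : Ordinal.{u}} (hδ : Order.IsSuccLimit δ) :
    ∃ π β ε, IsFiberDecomp δ δ.cof.ord π β ε ∧ ∀ j < δ.cof.ord, ε j < δ := by
  obtain ⟨f, hf⟩ := exists_isFundamentalSeq (o := δ) rfl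
  set π : Ordinal.{u} → Ordinal.{u} := fun i => sInf {j | ∃ h : j < δ.cof.ord, i ≤ f ⟨j, h⟩}
  have hne : ∀ i < δ, {j | ∃ h : j < δ.cof.ord, i ≤ f ⟨j, h⟩}.Nonempty := fun i hi => by
    obtain ⟨_, ⟨j, rfl⟩, hj⟩ := hf.isCofinal_range ⟨i, hi⟩
    exact ⟨j.1, j.2, hj⟩
  have hmem : ∀ i < δ, ∃ h : π i < δ.cof.ord, i ≤ f ⟨π i, h⟩ := fun i hi => csInf_mem (hne i hi)
  have hπf : ∀ j (hj : j < δ.cof.ord), π (f ⟨j, hj⟩) = j := fun j hj =>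
    le_antisymm (csInf_le' ⟨hj, le_rfl⟩)
      (le_csInf ⟨j, hj, le_rfl⟩ fun _ ⟨_, hle⟩ => hf.strictMono.le_iff_le.1 hle)
  obtain ⟨β, ε, h⟩ := exists_isFiberDecomp_of_monotone (π := π) (fun i hi => (hmem i hi).1)
    (fun i _ i' hi' hii' => csInf_le_csInf' (hne i' hi') fun _ ⟨hj, hle⟩ => ⟨hj, hii'.trans hle⟩)
    (fun j hj => ⟨f ⟨j, hj⟩, (f ⟨j, hj⟩).2, hπf j hj⟩)
  refine ⟨π, β, ε, h, fun j hj => ?_⟩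
  calc ε j ≤ (f ⟨j, hj⟩ : Ordinal.{u}) + 1 - 0 := h.length_le hj fun i hi hπi => by
        obtain ⟨_, hle⟩ := hmem i hi
        subst hπi
        exact ⟨zero_le, Order.lt_add_one_iff.2 hle⟩
    _ < δ := by simpa using hδ.add_one_lt (f ⟨j, hj⟩).2

theorem exists_isFiberDecomp_lt {δ : Ordinal.{u}} (h : δ.card.ord < δ) :
    ∃ η π β ε, IsFiberDecomp δ η π β ε ∧ η < δ ∧ ∀ j < η, ε j < δ := by
  have hω : ω ≤ δ := by
    by_contra! hδ
    obtain ⟨n, rfl⟩ := lt_omega0.1 hδ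
    simp at h
  rcases zero_or_succ_or_isSuccLimit δ with rfl | ⟨δ₀, rfl⟩ | hlim
  · simp at h
  · rw [Order.succ_eq_add_one] at hω ⊢
    have h2 : 2 ≤ δ₀ := Order.lt_add_one_iff.1 ((natCast_lt_omega0 2).trans_le hω)
    obtain ⟨π, β, ε, hdec, hε₀, hε₁⟩ := exists_isFiberDecomp_add (α := δ₀) (ρ := 1)
      (zero_lt_two.trans_le h2) zero_lt_one
    refine ⟨2, π, β, ε, hdec, Order.lt_add_one_iff.2 h2, fun j hj => ?_⟩
    rcases Ordinal.eq_zero_or_eq_one_of_lt_two hj with rfl | rfl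
    · exact Order.lt_add_one_iff.2 hε₀
    · exact hε₁.trans_lt (one_lt_two.trans_le h2 |>.trans (lt_add_one δ₀))
  · obtain ⟨π, β, ε, hdec, hε⟩ := exists_isFiberDecomp_cof hlim
    exact ⟨_, π, β, ε, hdec, (ord_le_ord.2 (cof_le_card δ)).trans_lt h, hε⟩

namespace PartialOrdinalSemigroup

variable {S : Type u}

theorem prod_eq_of_isFiberDecomp {Q₁ Q₂ : PartialOrdinalSemigroup S} {δ η : Ordinal.{u}}
    {a : Ordinal.{u} → S} {π β ε : Ordinal.{u} → Ordinal.{u}} (hdec : IsFiberDecomp δ η π β ε)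
    (h₁ : (Q₁.prod δ a).isSome) (h₂ : (Q₂.prod δ a).isSome)
    (hfib : ∀ j < η, Q₁.prod (ε j) (fun i => a (β j + i)) = Q₂.prod (ε j) (fun i => a (β j + i)))
    (hout : ∀ b, Q₁.prod η b = Q₂.prod η b) :
    Q₁.prod δ a = Q₂.prod δ a := by
  obtain ⟨s₁, hs₁⟩ := Option.isSome_iff_exists.1 h₁
  obtain ⟨s₂, hs₂⟩ := Option.isSome_iff_exists.1 h₂
  obtain ⟨b₁, hb₁, hout₁⟩ := Q₁.ord δ η a π β ε s₁ hdec hs₁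
  obtain ⟨b₂, hb₂, hout₂⟩ := Q₂.ord δ η a π β ε s₂ hdec hs₂
  have hb : ∀ j < η, b₁ j = b₂ j := fun j hj =>
    Option.some.inj (by rw [← hb₁ j hj, ← hb₂ j hj, hfib j hj])
  rw [hs₁, hs₂, ← hout₁, ← hout₂, hout, Q₂.congr η b₁ b₂ hb]

theorem prod_eq_of_card_le {γ : Ordinal.{u}} {P Q₁ Q₂ : PartialOrdinalSemigroup S}
    (hP : DomExactly P (fun δ => 0 < δ ∧ δ ≤ γ))
    (hQ₁ : DomExactly Q₁ (fun δ => 0 < δ ∧ δ.card ≤ γ.card))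
    (hQ₂ : DomExactly Q₂ (fun δ => 0 < δ ∧ δ.card ≤ γ.card))
    (hE₁ : Extends Q₁ P) (hE₂ : Extends Q₂ P) (δ : Ordinal.{u}) (hδ : δ.card ≤ γ.card)
    (a : Ordinal.{u} → S) : Q₁.prod δ a = Q₂.prod δ a := by
  induction δ using WellFoundedLT.induction generalizing a with | _ δ IH => ?_
  rcases eq_zero_or_pos δ with rfl | hpos
  · rw [Option.not_isSome_iff_eq_none.1 fun h => ((hQ₁ 0 a).1 h).1.false,
      Option.not_isSome_iff_eq_none.1 fun h => ((hQ₂ 0 a).1 h).1.false]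
  rcases le_or_gt δ γ with hle | hlt
  · obtain ⟨s, hs⟩ := Option.isSome_iff_exists.1 ((hP δ a).2 ⟨hpos, hle⟩)
    rw [hE₁ δ a s hs, hE₂ δ a s hs]
  · have hshort : ∀ o < δ, o.card ≤ γ.card := fun o ho => (card_le_card ho.le).trans hδ
    obtain ⟨η, π, β, ε, hdec, hη, hε⟩ :=
      exists_isFiberDecomp_lt ((ord_le_ord.2 hδ).trans_lt ((ord_card_le γ).trans_lt hlt))
    exact prod_eq_of_isFiberDecomp hdec ((hQ₁ δ a).2 ⟨hpos, hδ⟩) ((hQ₂ δ a).2 ⟨hpos, hδ⟩)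
      (fun j hj => IH _ (hε j hj) (hshort _ (hε j hj)) _) (IH η hη (hshort η hη))

end PartialOrdinalSemigroup

theorem extension_unique_general {S : Type u} (γ : Ordinal.{u})
    (P Q₁ Q₂ : PartialOrdinalSemigroup S)
    (hP : DomExactly P (fun δ => 0 < δ ∧ δ ≤ γ))
    (hQ₁ : DomExactly Q₁ (fun δ => 0 < δ ∧ δ.card ≤ γ.card))
    (hQ₂ : DomExactly Q₂ (fun δ => 0 < δ ∧ δ.card ≤ γ.card))
    (hE₁ : Extends Q₁ P) (hE₂ : Extends Q₂ P) :
    ∀ δ : Ordinal.{u}, δ.card = γ.card → ∀ a, Q₁.prod δ a = Q₂.prod δ a :=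
  fun δ hδ => PartialOrdinalSemigroup.prod_eq_of_card_le hP hQ₁ hQ₂ hE₁ hE₂ δ hδ.le

/-- Uniqueness of the extension: if `P` is a `≤γ`-semigroup (`γ` infinite) and `Q₁`, `Q₂`
are both extensions of `P` whose products are defined exactly on sequences indexed by
nonzero ordinals of cardinality `≤ |γ|`, then `Q₁` and `Q₂` agree on all sequences
indexed by any ordinal `δ` with `|δ| = |γ|`. -/
theorem extension_unique {S : Type u} (γ : Ordinal.{u}) (hγ : Ordinal.omega0 ≤ γ)
    (P Q₁ Q₂ : PartialOrdinalSemigroup S)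
    (hP : DomExactly P (fun δ => 0 < δ ∧ δ ≤ γ))
    (hQ₁ : DomExactly Q₁ (fun δ => 0 < δ ∧ δ.card ≤ γ.card))
    (hQ₂ : DomExactly Q₂ (fun δ => 0 < δ ∧ δ.card ≤ γ.card))
    (hE₁ : Extends Q₁ P) (hE₂ : Extends Q₂ P) :
    ∀ δ : Ordinal.{u}, δ.card = γ.card → ∀ a, Q₁.prod δ a = Q₂.prod δ a :=
  extension_unique_general γ P Q₁ Q₂ hP hQ₁ hQ₂ hE₁ hE₂
end

section
/- If μ is a singular cardinal, then every <μ-semigroup can be uniquely expanded to a ≤μ-semigroup: the product of any μ-indexed sequence is defined via any strictly increasing continuous cofinal sequence (β_j)_{j<cf(μ)} in μ with β_0 = 0 by Π_{i<μ} a_i = Π_{j<cf(μ)} Π_{i∈[β_j,β_{j+1})} a_i (well-defined since cf(μ) < μ and each β_{j+1} < μ), this value is independent of the chosen cofinal sequence, and the expanded structure satisfies (U) and (Ord). -/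
universe u

open Ordinal Cardinal

/-!
A partition of `δ` into `η` consecutive intervals is encoded by its normal sequence of cut
points (`IsTiling`); axiom (Ord) for it says that a product is the product of the products of
its pieces. Since `μ` is singular, `μ.ord` has tilings into a limit number `< μ.ord` of pieces,
each of length `< μ.ord`; the `μ.ord`-indexed product is defined along one of them. The value
does not depend on the tiling: the enumeration of the union of the (closed) ranges of two such
tilings is a common refinement with fewer than `μ.ord` pieces, and (Ord) in `P` computes both
products through it. Conversely (Ord) in any expansion forces this value, which gives uniqueness
and the formula. Finally (Ord) holds in the expansion: a decomposition of `μ.ord` into `μ.ord`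
pieces is regrouped along a base tiling, and a decomposition into fewer pieces is refined by its
common refinement with the base tiling; only its last piece can have length `μ.ord`, and that
piece is tiled by a tail of the refinement.
-/

open Order Set

/-- `c` lists the cut points `c 0 = 0 < c 1 < … < c η = δ` of a partition of `δ` into the
intervals `[c j, c (j + 1))`, `j < η`. It is normal on all ordinals, not only on `Iic η`, so
that the theory of normal functions applies. -/
structure IsTiling (δ η : Ordinal.{u}) (c : Ordinal.{u} → Ordinal.{u}) : Prop where
  isNormal : IsNormal c
  map_zero : c 0 = 0
  map_top : c η = δ

namespace IsTiling

variable {δ η : Ordinal.{u}} {c : Ordinal.{u} → Ordinal.{u}}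

theorem lt_top (hc : IsTiling δ η c) {j : Ordinal.{u}} (hj : j < η) : c j < δ :=
  hc.map_top ▸ hc.isNormal.strictMono hj

theorem le_top (hc : IsTiling δ η c) {j : Ordinal.{u}} (hj : j ≤ η) : c j ≤ δ :=
  hc.map_top ▸ hc.isNormal.monotone hj

theorem le_self (hc : IsTiling δ η c) : η ≤ δ :=
  hc.map_top ▸ hc.isNormal.strictMono.le_apply

theorem comp {θ : Ordinal.{u}} {e : Ordinal.{u} → Ordinal.{u}} (hc : IsTiling δ θ c)
    (he : IsTiling θ η e) : IsTiling δ η (c ∘ e) :=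
  ⟨hc.isNormal.comp he.isNormal, by simp [he.map_zero, hc.map_zero],
    by simp [he.map_top, hc.map_top]⟩

theorem le_iff_le_sSup (hc : IsTiling δ η c) {j x : Ordinal.{u}} :
    c j ≤ x ↔ j ≤ sSup (c ⁻¹' Iic x) :=
  hc.isNormal.le_iff_le_sSup' ⟨0, by simp [hc.map_zero]⟩

/-- The piece containing `x` has index `sSup (c ⁻¹' Iic x)`. -/
theorem isFiberDecomp (hc : IsTiling δ η c) :
    IsFiberDecomp δ η (fun x => sSup (c ⁻¹' Iic x)) c (fun j => c (j + 1) - c j) := by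
  have hpiece : ∀ j x, (j = sSup (c ⁻¹' Iic x)) ↔ c j ≤ x ∧ x < c (j + 1) := by
    intro j x
    rw [hc.le_iff_le_sSup, ← not_le, hc.le_iff_le_sSup, add_one_le_iff, not_lt]
    exact le_antisymm_iff
  refine ⟨fun i hi => ?_, fun i _ i' _ hii' => ?_, fun j hj => ⟨c j, hc.lt_top hj, ?_⟩,
    fun j hj i => ?_⟩
  · rw [← not_le, ← hc.le_iff_le_sSup, hc.map_top, not_le]
    exact hi
  · rw [← hc.le_iff_le_sSup]
    exact ((hc.le_iff_le_sSup).2 le_rfl).trans hii'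
  · exact ((hpiece j (c j)).2 ⟨le_rfl, hc.isNormal.strictMono (lt_add_one j)⟩).symm
  · rw [Ordinal.add_sub_cancel_of_le (hc.isNormal.monotone (le_self_add : j ≤ j + 1)), eq_comm,
      hpiece]
    exact ⟨fun h => h.2, fun h => ⟨h.2.trans_le (hc.le_top (add_one_le_iff.2 hj)), h⟩⟩

end IsTiling

theorem isTiling_tail {c : Ordinal.{u} → Ordinal.{u}} (hc : IsNormal c) {i k : Ordinal.{u}}
    (hik : i ≤ k) : IsTiling (c k - c i) (k - i) (fun t => c (i + t) - c i) := by
  have hci : ∀ t, c i ≤ c (i + t) := fun t => hc.monotone (le_self_add : i ≤ i + t)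
  refine ⟨isNormal_iff.2 ⟨fun t t' htt' => ?_, fun o ho x hx => ?_⟩, by simp, by
    rw [Ordinal.add_sub_cancel_of_le hik]⟩
  · rw [← add_lt_add_iff_left (c i), Ordinal.add_sub_cancel_of_le (hci t),
      Ordinal.add_sub_cancel_of_le (hci t')]
    exact hc.strictMono ((add_lt_add_iff_left i).2 htt')
  · exact Ordinal.sub_le.2 (((hc.comp (Ordinal.isNormal_add_right i)).le_iff_forall_le ho).2
      fun t ht => Ordinal.sub_le.1 (hx t ht))

theorem isTiling_piecewise {δ η : Ordinal.{u}} {β : Ordinal.{u} → Ordinal.{u}} (hη : 0 < η)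
    (h0 : β 0 = 0) (hmono : StrictMonoOn β (Iio η)) (hlt : ∀ j < η, β j < δ)
    (hcont : ∀ j < η, IsSuccLimit j → ∀ x, (∀ k < j, β k ≤ x) → β j ≤ x)
    (htop : IsSuccLimit η → ∀ x, (∀ k < η, β k ≤ x) → δ ≤ x) :
    IsTiling δ η (fun t => if t < η then β t else δ + (t - η)) := by
  set d := fun t => if t < η then β t else δ + (t - η)
  have hlo : ∀ t < η, d t = β t := fun t ht => if_pos ht
  have hhi : ∀ t, η ≤ t → d t = δ + (t - η) := fun t ht => if_neg (not_lt.2 ht)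
  have hbelow : ∀ o ≤ η, ∀ x, (∀ k < o, d k ≤ x) → ∀ k < o, β k ≤ x :=
    fun o ho x hx k hk => hlo k (hk.trans_le ho) ▸ hx k hk
  refine ⟨isNormal_iff.2 ⟨fun t t' htt' => ?_, fun o ho x hx => ?_⟩, by rw [hlo 0 hη, h0],
    by rw [hhi η le_rfl, Ordinal.sub_self, add_zero]⟩
  · rcases lt_or_ge t' η with ht' | ht'
    · rw [hlo t (htt'.trans ht'), hlo t' ht']
      exact hmono (htt'.trans ht') ht' htt'
    rw [hhi t' ht']
    rcases lt_or_ge t η with ht | ht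
    · rw [hlo t ht]
      exact (hlt t ht).trans_le le_self_add
    · rw [hhi t ht, add_lt_add_iff_left, ← add_lt_add_iff_left η,
        Ordinal.add_sub_cancel_of_le ht, Ordinal.add_sub_cancel_of_le ht']
      exact htt'
  · rcases lt_trichotomy o η with hoη | rfl | hηo
    · rw [hlo o hoη]
      exact hcont o hoη ho x (hbelow o hoη.le x hx)
    · rw [hhi o le_rfl, Ordinal.sub_self, add_zero]
      exact htop ho x (hbelow o le_rfl x hx)
    · rw [hhi o hηo.le, (Ordinal.isNormal_add_right δ).le_iff_forall_le
        (Ordinal.isSuccLimit_sub ho.isSuccPrelimit hηo)]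
      intro s hs
      have hηs : η + s < o := Ordinal.lt_sub.1 hs
      simpa [hhi (η + s) le_self_add, Ordinal.add_sub_cancel] using hx (η + s) hηs

theorem isTiling_of_cofinal {δ η : Ordinal.{u}} {β : Ordinal.{u} → Ordinal.{u}}
    (hδ : IsSuccLimit δ) (hη : IsSuccLimit η) (hmono : ∀ j < η, ∀ k < η, j < k → β j < β k)
    (hcont : ∀ j < η, IsSuccLimit j → β j = sSup (β '' Iio j)) (hlt : ∀ j < η, β j < δ)
    (hcof : ∀ x < δ, ∃ j < η, x ≤ β j) (h0 : β 0 = 0) :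
    IsTiling δ η (fun t => if t < η then β t else δ + (t - η)) := by
  refine isTiling_piecewise hη.bot_lt h0 (fun j hj k hk => hmono j hj k hk) hlt
    (fun j hj hlim x hx => ?_) (fun _ x hx => ?_)
  · rw [hcont j hj hlim]
    refine csSup_le ⟨β 0, 0, hlim.bot_lt, rfl⟩ ?_
    rintro _ ⟨k, hk, rfl⟩
    exact hx k hk
  · by_contra hxδ
    obtain ⟨j, hj, hxj⟩ := hcof (x + 1) (hδ.add_one_lt (not_le.1 hxδ))
    exact (lt_add_one x).not_ge (hxj.trans (hx j hj))

namespace IsFiberDecomp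

variable {δ η : Ordinal.{u}} {π β ε : Ordinal.{u} → Ordinal.{u}} {i j : Ordinal.{u}}

theorem start_mem_fiber (h : IsFiberDecomp δ η π β ε) (hj : j < η) : β j < δ ∧ π (β j) = j := by
  obtain ⟨i, hi, hπi⟩ := h.2.2.1 j hj
  have hmem := (h.2.2.2 j hj i).1 ⟨hi, hπi⟩
  exact (h.2.2.2 j hj (β j)).2 ⟨le_rfl, hmem.1.trans_lt hmem.2⟩

theorem add_le (h : IsFiberDecomp δ η π β ε) (hj : j < η) : β j + ε j ≤ δ := by
  by_contra hδε
  exact lt_irrefl δ ((h.2.2.2 j hj δ).2 ⟨(h.start_mem_fiber hj).1.le, not_le.1 hδε⟩).1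

theorem lt_iff (h : IsFiberDecomp δ η π β ε) (hj : j < η) (hi : i < δ) :
    i < β j ↔ π i < j := by
  obtain ⟨hβδ, hπβ⟩ := h.start_mem_fiber hj
  refine ⟨fun hiβ => lt_of_le_of_ne (hπβ ▸ h.2.1 i hi (β j) hβδ hiβ.le) fun hπi => ?_,
    fun hπi => ?_⟩
  · exact not_le.2 hiβ ((h.2.2.2 j hj i).1 ⟨hi, hπi⟩).1
  · by_contra hβi
    exact not_le.2 hπi (hπβ ▸ h.2.1 _ hβδ i hi (not_lt.1 hβi))

theorem lt_add_iff (h : IsFiberDecomp δ η π β ε) (hj : j < η) (hi : i < δ) :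
    i < β j + ε j ↔ π i ≤ j := by
  refine ⟨fun hiε => ?_, fun hπi => ?_⟩
  · by_cases hβi : β j ≤ i
    · exact ((h.2.2.2 j hj i).2 ⟨hβi, hiε⟩).2.le
    · exact ((h.lt_iff hj hi).1 (not_le.1 hβi)).le
  · rcases hπi.lt_or_eq with hπi | hπi
    · exact ((h.lt_iff hj hi).2 hπi).trans_le le_self_add
    · exact ((h.2.2.2 j hj i).1 ⟨hi, hπi⟩).2

theorem exists_isTiling (h : IsFiberDecomp δ η π β ε) (hδ : 0 < δ) :
    ∃ d, IsTiling δ η d ∧ ∀ j < η, d j = β j ∧ d (j + 1) - d j = ε j := by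
  have hπ := h.1
  have hη : 0 < η := (hπ 0 hδ).pos
  have hgap : ∀ x < δ, π x + 1 < η → x < β (π x + 1) :=
    fun x hx hx' => (h.lt_iff hx' hx).2 (lt_add_one _)
  have hd := isTiling_piecewise (δ := δ) hη
    (by_contra fun h0 => not_lt_zero ((h.lt_iff hη hδ).1 (pos_iff_ne_zero.2 h0)))
    (fun j hj k hk hjk => (h.lt_iff hk (h.start_mem_fiber hj).1).2 ((h.start_mem_fiber hj).2.symm ▸ hjk))
    (fun j hj => (h.start_mem_fiber hj).1)
    (fun j hj hlim x hx => by
      by_contra hxβ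
      have hxδ : x < δ := (not_le.1 hxβ).trans (h.start_mem_fiber hj).1
      have hπx := hlim.add_one_lt ((h.lt_iff hj hxδ).1 (not_le.1 hxβ))
      exact not_le.2 (hgap x hxδ (hπx.trans hj)) (hx _ hπx))
    (fun hlim x hx => by
      by_contra hxδ
      have hπx := hlim.add_one_lt (hπ x (not_le.1 hxδ))
      exact not_le.2 (hgap x (not_le.1 hxδ) hπx) (hx _ hπx))
  set d := fun t => if t < η then β t else δ + (t - η)
  have hd_iff : ∀ t, ∀ i < δ, i < d t ↔ π i < t := by
    intro t i hi
    by_cases ht : t < η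
    · simpa only [d, if_pos ht] using h.lt_iff ht hi
    · simp only [d, if_neg ht]
      exact iff_of_true (hi.trans_le le_self_add) ((hπ i hi).trans_le (not_lt.1 ht))
  refine ⟨d, hd, fun j hj => ⟨if_pos hj, ?_⟩⟩
  have hiff : ∀ i < δ, i < d (j + 1) ↔ i < β j + ε j := fun i hi => by
    rw [hd_iff _ i hi, Order.lt_add_one_iff, h.lt_add_iff hj hi]
  have hle : d (j + 1) ≤ δ := hd.le_top (add_one_le_iff.2 hj)
  have hsucc : d (j + 1) = β j + ε j :=
    le_antisymm (le_of_forall_lt fun i hi => (hiff i (hi.trans_le hle)).1 hi)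
      (le_of_forall_lt fun i hi => (hiff i (hi.trans_le (h.add_le hj))).2 hi)
  rw [hsucc, show d j = β j from if_pos hj, Ordinal.add_sub_cancel]

end IsFiberDecomp

theorem Order.IsNormal.exists_isNormal_comp_eq {E c : Ordinal.{u} → Ordinal.{u}}
    (hE : IsNormal E) (hc : IsNormal c) (hsub : range c ⊆ range E) :
    ∃ e, IsNormal e ∧ c = E ∘ e := by
  choose e he using fun t => hsub ⟨t, rfl⟩
  refine ⟨e, isNormal_iff.2 ⟨fun t t' h => ?_, fun o ho x hx => ?_⟩, funext fun t => (he t).symm⟩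
  · rw [← hE.strictMono.lt_iff_lt, he, he]
    exact hc.strictMono h
  · rw [← hE.strictMono.le_iff_le, he, hc.le_iff_forall_le ho]
    exact fun t ht => he t ▸ hE.monotone (hx t ht)

theorem IsTiling.exists_common_refinement {δ η₁ η₂ : Ordinal.{u}}
    {c₁ c₂ : Ordinal.{u} → Ordinal.{u}} (h₁ : IsTiling δ η₁ c₁) (h₂ : IsTiling δ η₂ c₂) :
    ∃ θ E e₁ e₂, IsTiling δ θ E ∧ IsTiling θ η₁ e₁ ∧ IsTiling θ η₂ e₂ ∧
      c₁ = E ∘ e₁ ∧ c₂ = E ∘ e₂ ∧ θ.card ≤ η₁.card + η₂.card := by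
  set C := range c₁ ∪ range c₂
  have hC : ¬ BddAbove C := fun hb =>
    h₁.isNormal.strictMono.not_bddAbove_range_of_wellFoundedLT (hb.mono subset_union_left)
  have hCsup : ∀ t ⊆ C, t.Nonempty → BddAbove t → sSup t ∈ C := fun t ht hne hbdd =>
    dirSupClosed_iff_of_linearOrder.1
      (h₁.isNormal.dirSupClosed_range.union h₂.isNormal.dirSupClosed_range) ht hne
      (isLUB_csSup hne hbdd)
  have hE := Ordinal.isNormal_enumOrd hCsup hC
  set E := Ordinal.enumOrd C
  have hrange : range E = C := Ordinal.range_enumOrd hC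
  obtain ⟨e₁, he₁, hc₁⟩ := hE.exists_isNormal_comp_eq h₁.isNormal (hrange ▸ subset_union_left)
  obtain ⟨e₂, he₂, hc₂⟩ := hE.exists_isNormal_comp_eq h₂.isNormal (hrange ▸ subset_union_right)
  have hzero : ∀ {e : Ordinal.{u} → Ordinal.{u}}, E (e 0) = 0 → e 0 = 0 := fun h =>
    nonpos_iff_eq_zero.1 (hE.strictMono.le_apply.trans h.le)
  have hE₁ : E (e₁ 0) = 0 := by simpa [hc₁] using h₁.map_zero
  have hE₂ : E (e₂ 0) = 0 := by simpa [hc₂] using h₂.map_zero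
  have htop : E (e₂ η₂) = E (e₁ η₁) := by
    change (E ∘ e₂) η₂ = (E ∘ e₁) η₁
    rw [← hc₁, ← hc₂, h₁.map_top, h₂.map_top]
  refine ⟨e₁ η₁, E, e₁, e₂, ⟨hE, by simpa [hzero hE₁] using hE₁, ?_⟩, ⟨he₁, hzero hE₁, rfl⟩,
    ⟨he₂, hzero hE₂, hE.strictMono.injective htop⟩, hc₁, hc₂, ?_⟩
  · rw [← h₁.map_top, hc₁]; rfl
  have hcover : Iio (e₁ η₁) ⊆ e₁ '' Iio η₁ ∪ e₂ '' Iio η₂ := by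
    intro t ht
    have hEt : E t ∈ C := hrange ▸ mem_range_self t
    rcases hEt with ⟨s, hs⟩ | ⟨s, hs⟩
    · have hst : e₁ s = t := hE.strictMono.injective (by rw [← hs, hc₁]; rfl)
      exact Or.inl ⟨s, he₁.strictMono.lt_iff_lt.1 (hst ▸ ht), hst⟩
    · have hst : e₂ s = t := hE.strictMono.injective (by rw [← hs, hc₂]; rfl)
      refine Or.inr ⟨s, ?_, hst⟩
      show s < η₂
      rw [← he₂.strictMono.lt_iff_lt, hst, hE.strictMono.injective htop]
      exact ht
  have := (Cardinal.mk_le_mk_of_subset hcover).trans ((Cardinal.mk_union_le _ _).trans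
    (add_le_add Cardinal.mk_image_le Cardinal.mk_image_le))
  simpa only [Cardinal.mk_Iio_ordinal, ← Cardinal.lift_add, Cardinal.lift_le] using this

theorem isNormal_iSup_Iio_add_one {g : Ordinal.{u} → Ordinal.{u}} (hg : StrictMono g) :
    IsNormal fun j => ⨆ i : Iio j, g i.1 + 1 := by
  refine isNormal_iff.2 ⟨fun j j' hjj' => ?_, fun o ho x hx => ?_⟩
  · calc ⨆ i : Iio j, g i.1 + 1 ≤ g j := Ordinal.iSup_le fun i => add_one_le_iff.2 (hg i.2)
      _ < g j + 1 := lt_add_one _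
      _ ≤ ⨆ i : Iio j', g i.1 + 1 := Ordinal.le_iSup (fun i : Iio j' => g i.1 + 1) ⟨j, hjj'⟩
  · exact Ordinal.iSup_le fun i => (Ordinal.le_iSup (fun k : Iio (i.1 + 1) => g k.1 + 1)
      ⟨i, Set.mem_Iio.2 (lt_add_one _)⟩).trans (hx _ (ho.add_one_lt i.2))

theorem exists_isTiling_cof_ord (o : Ordinal.{u}) : ∃ c, IsTiling o o.cof.ord c := by
  obtain ⟨f, hf⟩ := Ordinal.exists_isFundamentalSeq (o := o) rfl
  -- beyond the fundamental sequence, `o + i` only keeps `g` strictly increasing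
  set g : Ordinal.{u} → Ordinal.{u} := fun i => if h : i < o.cof.ord then f ⟨i, h⟩ else o + i
  have hg : StrictMono g := by
    intro i i' hii'
    by_cases hi' : i' < o.cof.ord
    · simp only [g, dif_pos hi', dif_pos (hii'.trans hi')]
      exact hf.strictMono (Subtype.mk_lt_mk.2 hii')
    · simp only [g, dif_neg hi']
      by_cases hi : i < o.cof.ord
      · simp only [dif_pos hi]
        exact (f _).2.trans_le le_self_add
      · simpa only [dif_neg hi, add_lt_add_iff_left] using hii'
  refine ⟨_, isNormal_iSup_Iio_add_one hg, by simp, ?_⟩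
  refine (iSup_congr fun i : Iio o.cof.ord => ?_).trans hf.iSup_add_one_eq
  simp only [g, dif_pos (show i.1 < o.cof.ord from i.2)]

theorem Cardinal.ord_sub_eq_self {μ : Cardinal.{u}} (hμ : ℵ₀ ≤ μ) {x : Ordinal.{u}}
    (hx : x < μ.ord) : μ.ord - x = μ.ord := by
  conv_lhs => rw [← (Ordinal.isPrincipal_add_ord hμ).add_eq_right hx]
  exact Ordinal.add_sub_cancel _ _

namespace PartialOrdinalSemigroup

variable {S : Type u} (P : PartialOrdinalSemigroup S)

/-- The product of the piece `[c j, c (j + 1))` of `a`. The default `a (c j)`, used when that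
product is undefined, is chosen so that `pieceProd_tail` needs no definedness hypothesis. -/
noncomputable def pieceProd (c : Ordinal.{u} → Ordinal.{u}) (a : Ordinal.{u} → S)
    (j : Ordinal.{u}) : S :=
  (P.prod (c (j + 1) - c j) fun γ => a (c j + γ)).getD (a (c j))

variable {P} {M : Ordinal.{u}} {c e : Ordinal.{u} → Ordinal.{u}} {a : Ordinal.{u} → S} {s : S}

theorem pieceProd_eq_of_prod_eq {j : Ordinal.{u}}
    (h : P.prod (c (j + 1) - c j) (fun γ => a (c j + γ)) = some s) : P.pieceProd c a j = s := by
  simp [pieceProd, h]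

theorem pieceProd_congr {b : Ordinal.{u} → S} (hc : StrictMono c) {j : Ordinal.{u}}
    (hab : ∀ i < c (j + 1), a i = b i) : P.pieceProd c a j = P.pieceProd c b j := by
  have hcj : c j < c (j + 1) := hc (lt_add_one j)
  have hpiece : ∀ γ < c (j + 1) - c j, a (c j + γ) = b (c j + γ) := fun γ hγ =>
    hab _ (by simpa [Ordinal.add_sub_cancel_of_le hcj.le] using
      (add_lt_add_iff_left (c j)).2 hγ)
  simp only [pieceProd, P.congr _ _ _ hpiece, hab _ hcj]

theorem prod_pieceProd {δ η : Ordinal.{u}} (hc : IsTiling δ η c) (hs : P.prod δ a = some s) :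
    P.prod η (P.pieceProd c a) = some s ∧
      ∀ j < η, P.prod (c (j + 1) - c j) (fun γ => a (c j + γ)) = some (P.pieceProd c a j) := by
  obtain ⟨b, hb, hbs⟩ := P.ord δ η a _ c _ s hc.isFiberDecomp hs
  have hbj : ∀ j < η, P.pieceProd c a j = b j := fun j hj => pieceProd_eq_of_prod_eq (hb j hj)
  exact ⟨(P.congr _ _ _ hbj).trans hbs, fun j hj => (hbj j hj).symm ▸ hb j hj⟩

theorem pieceProd_tail (hc : Monotone c) (i t : Ordinal.{u}) :
    P.pieceProd (fun t => c (i + t) - c i) (fun γ => a (c i + γ)) t = P.pieceProd c a (i + t) := by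
  have hci : c i ≤ c (i + t) := hc le_self_add
  have hlen : c (i + t + 1) - c i - (c (i + t) - c i) = c (i + t + 1) - c (i + t) := by
    rw [Ordinal.sub_sub, Ordinal.add_sub_cancel_of_le hci]
  simp only [pieceProd, ← add_assoc, Ordinal.add_sub_cancel_of_le hci, hlen]

theorem prod_pieceProd_add (hc : IsNormal c) {i k : Ordinal.{u}} (hik : i ≤ k)
    (h : P.prod (c k - c i) (fun γ => a (c i + γ)) = some s) :
    P.prod (k - i) (fun t => P.pieceProd c a (i + t)) = some s := by
  have htail := (prod_pieceProd (isTiling_tail hc hik) h).1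
  rwa [funext (P.pieceProd_tail (a := a) hc.monotone i)] at htail

theorem prod_piece_eq_some {j : Ordinal.{u}}
    (hP : DomExactly P (fun δ => 0 < δ ∧ δ < M)) (hc : StrictMono c) (hj : c (j + 1) < M) :
    P.prod (c (j + 1) - c j) (fun γ => a (c j + γ)) = some (P.pieceProd c a j) := by
  obtain ⟨v, hv⟩ := Option.isSome_iff_exists.1 ((hP _ _).2
    ⟨pos_iff_ne_zero.2 (Ordinal.sub_ne_zero_iff_lt.2 (hc (lt_add_one j))),
      (Ordinal.sub_le_self _ _).trans_lt hj⟩)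
  rw [hv, pieceProd_eq_of_prod_eq hv]

theorem pieceProd_pieceProd {j : Ordinal.{u}}
    (hP : DomExactly P (fun δ => 0 < δ ∧ δ < M)) (hc : IsNormal c) (he : StrictMono e)
    (hj : c (e (j + 1)) < M) : P.pieceProd e (P.pieceProd c a) j = P.pieceProd (c ∘ e) a j :=
  pieceProd_eq_of_prod_eq (prod_pieceProd_add hc (he (lt_add_one j)).le
    (prod_piece_eq_some hP (hc.strictMono.comp he) hj))

theorem prod_pieceProd_comp {θ η : Ordinal.{u}}
    (hP : DomExactly P (fun δ => 0 < δ ∧ δ < M)) (hc : IsTiling M θ c) (he : IsTiling θ η e)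
    (hη : IsSuccLimit η) (hs : P.prod θ (P.pieceProd c a) = some s) :
    P.prod η (P.pieceProd (c ∘ e) a) = some s :=
  (P.congr _ _ _ fun _ hj => pieceProd_pieceProd hP hc.isNormal he.isNormal.strictMono
    ((hc.comp he).lt_top (hη.add_one_lt hj))).symm.trans (prod_pieceProd he hs).1

theorem prod_pieceProd_of_extends {Q : PartialOrdinalSemigroup S}
    (hP : DomExactly P (fun δ => 0 < δ ∧ δ < M)) (hQ : Extends Q P)
    {η : Ordinal.{u}} (hc : IsTiling M η c) (hη : IsSuccLimit η) (hηM : η < M)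
    (hs : Q.prod M a = some s) : P.prod η (P.pieceProd c a) = some s := by
  obtain ⟨hQs, hQpiece⟩ := prod_pieceProd hc hs
  have hpiece : ∀ j < η, Q.pieceProd c a j = P.pieceProd c a j := fun j hj =>
    Option.some.inj ((hQpiece j hj).symm.trans
      (hQ _ _ _ (prod_piece_eq_some hP hc.isNormal.strictMono (hc.lt_top (hη.add_one_lt hj)))))
  obtain ⟨v, hv⟩ := Option.isSome_iff_exists.1 ((hP η (P.pieceProd c a)).2 ⟨hη.bot_lt, hηM⟩)
  rw [hv, ← Option.some.inj ((hQ _ _ _ hv).symm.trans ((Q.congr _ _ _ hpiece).symm.trans hQs))]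

theorem ext {Q₁ Q₂ : PartialOrdinalSemigroup S} (h : Q₁.prod = Q₂.prod) : Q₁ = Q₂ := by
  cases Q₁; cases Q₂; cases h; rfl

variable {μ : Cardinal.{u}}

theorem prod_pieceProd_eq (hμ : ℵ₀ ≤ μ) (hP : DomExactly P (fun δ => 0 < δ ∧ δ < μ.ord))
    {η₁ η₂ : Ordinal.{u}} {c₁ c₂ : Ordinal.{u} → Ordinal.{u}}
    (h₁ : IsTiling μ.ord η₁ c₁) (hη₁ : IsSuccLimit η₁) (hη₁μ : η₁ < μ.ord)
    (h₂ : IsTiling μ.ord η₂ c₂) (hη₂ : IsSuccLimit η₂) (hη₂μ : η₂ < μ.ord)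
    (a : Ordinal.{u} → S) :
    P.prod η₁ (P.pieceProd c₁ a) = P.prod η₂ (P.pieceProd c₂ a) := by
  obtain ⟨θ, E, e₁, e₂, hE, he₁, he₂, rfl, rfl, hθ⟩ := h₁.exists_common_refinement h₂
  have hθμ : θ < μ.ord := Cardinal.lt_ord.2 (hθ.trans_lt
    (Cardinal.add_lt_of_lt hμ (Cardinal.lt_ord.1 hη₁μ) (Cardinal.lt_ord.1 hη₂μ)))
  have hθlim : IsSuccLimit θ := he₁.map_top ▸ he₁.isNormal.map_isSuccLimit hη₁
  obtain ⟨s, hs⟩ := Option.isSome_iff_exists.1 ((hP θ (P.pieceProd E a)).2 ⟨hθlim.bot_lt, hθμ⟩)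
  rw [prod_pieceProd_comp hP hE he₁ hη₁ hs, prod_pieceProd_comp hP hE he₂ hη₂ hs]

variable (P) in
noncomputable def extendAlong (M κ : Ordinal.{u}) (cs : Ordinal.{u} → Ordinal.{u}) :
    Ordinal.{u} → (Ordinal.{u} → S) → Option S :=
  fun δ a => if δ = M then P.prod κ (P.pieceProd cs a) else P.prod δ a

section Extension

variable {M κ δ : Ordinal.{u}} {cs : Ordinal.{u} → Ordinal.{u}}

theorem extendAlong_self (a : Ordinal.{u} → S) :
    P.extendAlong M κ cs M a = P.prod κ (P.pieceProd cs a) :=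
  if_pos rfl

theorem extendAlong_of_ne (hδ : δ ≠ M) (a : Ordinal.{u} → S) :
    P.extendAlong M κ cs δ a = P.prod δ a :=
  if_neg hδ

theorem extendAlong_isSome_iff (hP : DomExactly P (fun δ => 0 < δ ∧ δ < M)) (hκ : 0 < κ)
    (hκM : κ < M) (a : Ordinal.{u} → S) :
    (P.extendAlong M κ cs δ a).isSome ↔ 0 < δ ∧ δ ≤ M := by
  by_cases hδ : δ = M
  · subst hδ
    rw [extendAlong_self]
    exact iff_of_true ((hP _ _).2 ⟨hκ, hκM⟩) ⟨hκ.trans hκM, le_rfl⟩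
  · rw [extendAlong_of_ne hδ, hP]
    exact and_congr_right fun _ => ⟨le_of_lt, fun h => lt_of_le_of_ne h hδ⟩

theorem extends_extendAlong (hP : DomExactly P (fun δ => 0 < δ ∧ δ < M))
    {Q : PartialOrdinalSemigroup S}
    (hQ : Q.prod = P.extendAlong M κ cs) : Extends Q P := fun δ a s hs => by
  rw [hQ, extendAlong_of_ne ((hP δ a).1 (by simp [hs])).2.ne, hs]

/-- (Ord) for a tiling of `μ.ord` into `μ.ord` pieces: the pieces are small, and the
`μ.ord`-indexed product of their products is computed by grouping them along `cs`. -/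
theorem extendAlong_pieces_of_isTiling_self
    (hμ : ℵ₀ ≤ μ) (hP : DomExactly P (fun δ => 0 < δ ∧ δ < μ.ord))
    (hcs : IsTiling μ.ord κ cs) (hκ : IsSuccLimit κ) (hκμ : κ < μ.ord)
    {d : Ordinal.{u} → Ordinal.{u}}
    (hd : IsTiling μ.ord μ.ord d) {a : Ordinal.{u} → S} {s : S}
    (hs : P.prod κ (P.pieceProd cs a) = some s) :
    (∀ j < μ.ord, P.extendAlong μ.ord κ cs (d (j + 1) - d j) (fun γ => a (d j + γ)) =
      some (P.pieceProd d a j)) ∧ P.extendAlong μ.ord κ cs μ.ord (P.pieceProd d a) = some s := by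
  have hM : IsSuccLimit μ.ord := Cardinal.isSuccLimit_ord hμ
  refine ⟨fun j hj => ?_, ?_⟩
  · have hlt := hd.lt_top (hM.add_one_lt hj)
    rw [extendAlong_of_ne ((Ordinal.sub_le_self _ _).trans_lt hlt).ne]
    exact prod_piece_eq_some hP hd.isNormal.strictMono hlt
  · rw [extendAlong_self, ← hs, ← prod_pieceProd_eq hμ hP (hd.comp hcs) hκ hκμ hcs hκ hκμ a]
    exact P.congr _ _ _ fun j hj => pieceProd_pieceProd hP hd.isNormal hcs.isNormal.strictMono
      ((hd.comp hcs).lt_top (hκ.add_one_lt hj))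

/-- (Ord) for a tiling `d` of `μ.ord` into fewer than `μ.ord` pieces, through a common refinement
`E = d ∘ e` of `d` and `cs`. At most the last piece of `d` is not small; it has length `μ.ord`,
and its product is computed along the tail of `E`. -/
theorem exists_extendAlong_pieces_of_isTiling_lt
    (hμ : ℵ₀ ≤ μ) (hP : DomExactly P (fun δ => 0 < δ ∧ δ < μ.ord))
    (hcs : IsTiling μ.ord κ cs) (hκ : IsSuccLimit κ) (hκμ : κ < μ.ord)
    {η : Ordinal.{u}} {d : Ordinal.{u} → Ordinal.{u}}
    (hd : IsTiling μ.ord η d) (hη : η < μ.ord) {a : Ordinal.{u} → S} {s : S}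
    (hs : P.prod κ (P.pieceProd cs a) = some s) :
    ∃ b : Ordinal.{u} → S,
      (∀ j < η, P.extendAlong μ.ord κ cs (d (j + 1) - d j) (fun γ => a (d j + γ)) = some (b j)) ∧
        P.extendAlong μ.ord κ cs η b = some s := by
  obtain ⟨θ, E, e, e', hE, he, he', rfl, -, hθ⟩ := hd.exists_common_refinement hcs
  have hθμ : θ < μ.ord := Cardinal.lt_ord.2 (hθ.trans_lt
    (Cardinal.add_lt_of_lt hμ (Cardinal.lt_ord.1 hη) (Cardinal.lt_ord.1 hκμ)))
  have hθlim : IsSuccLimit θ := he'.map_top ▸ he'.isNormal.map_isSuccLimit hκ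
  obtain ⟨hbs, hb⟩ := prod_pieceProd he
    ((prod_pieceProd_eq hμ hP hE hθlim hθμ hcs hκ hκμ a).trans hs)
  refine ⟨P.pieceProd e (P.pieceProd E a), fun j hj => ?_, by rwa [extendAlong_of_ne hη.ne]⟩
  rw [← hb j hj]
  simp only [Function.comp_apply]
  rcases (hE.le_top (he.le_top (add_one_le_iff.2 hj))).lt_or_eq with hlt | heq
  · have hpiece := prod_piece_eq_some (c := E ∘ e) (a := a) hP
      (hE.isNormal.strictMono.comp he.isNormal.strictMono) hlt
    simp only [Function.comp_apply] at hpiece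
    rw [extendAlong_of_ne ((Ordinal.sub_le_self _ _).trans_lt hlt).ne, hpiece,
      prod_pieceProd_add hE.isNormal (he.isNormal.monotone le_self_add) hpiece]
  · have hej : e j < θ := he.lt_top hj
    have he1 : e (j + 1) = θ := hE.isNormal.strictMono.injective (heq.trans hE.map_top.symm)
    have hEj : E (e j) < μ.ord := hE.lt_top hej
    have habs := ord_sub_eq_self hμ hEj
    have htail := isTiling_tail hE.isNormal hej.le
    rw [hE.map_top, habs] at htail
    rw [heq, habs, extendAlong_self, he1, ← prod_pieceProd_eq hμ hP htail
      (Ordinal.isSuccLimit_sub hθlim.isSuccPrelimit hej) ((Ordinal.sub_le_self _ _).trans_lt hθμ)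
      hcs hκ hκμ, funext (P.pieceProd_tail hE.isNormal.monotone (e j))]

theorem extendAlong_ord
    (hμ : ℵ₀ ≤ μ) (hP : DomExactly P (fun δ => 0 < δ ∧ δ < μ.ord))
    (hcs : IsTiling μ.ord κ cs) (hκ : IsSuccLimit κ) (hκμ : κ < μ.ord)
    (δ η : Ordinal.{u}) (a : Ordinal.{u} → S)
    (π β ε : Ordinal.{u} → Ordinal.{u}) (s : S) (h : IsFiberDecomp δ η π β ε)
    (hs : P.extendAlong μ.ord κ cs δ a = some s) :
    ∃ b : Ordinal.{u} → S,
      (∀ j < η, P.extendAlong μ.ord κ cs (ε j) (fun γ => a (β j + γ)) = some (b j)) ∧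
        P.extendAlong μ.ord κ cs η b = some s := by
  by_cases hδ : δ = μ.ord
  · subst hδ
    rw [extendAlong_self] at hs
    obtain ⟨d, hd, hdβ⟩ := h.exists_isTiling (Cardinal.isSuccLimit_ord hμ).bot_lt
    suffices ∃ b : Ordinal.{u} → S,
        (∀ j < η, P.extendAlong μ.ord κ cs (d (j + 1) - d j) (fun γ => a (d j + γ)) =
          some (b j)) ∧ P.extendAlong μ.ord κ cs η b = some s by
      obtain ⟨b, hb, hbs⟩ := this
      exact ⟨b, fun j hj => by rw [← (hdβ j hj).1, ← (hdβ j hj).2]; exact hb j hj, hbs⟩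
    rcases hd.le_self.lt_or_eq with hη | rfl
    · exact exists_extendAlong_pieces_of_isTiling_lt hμ hP hcs hκ hκμ hd hη hs
    · exact ⟨_, extendAlong_pieces_of_isTiling_self hμ hP hcs hκ hκμ hd hs⟩
  · rw [extendAlong_of_ne hδ] at hs
    have hδμ := (hP δ a).1 (by simp [hs])
    obtain ⟨d, hd, hdβ⟩ := h.exists_isTiling hδμ.1
    obtain ⟨b, hb, hbs⟩ := P.ord δ η a π β ε s h hs
    refine ⟨b, fun j hj => ?_, by rwa [extendAlong_of_ne (hd.le_self.trans_lt hδμ.2).ne]⟩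
    have hεδ : ε j ≤ δ :=
      (hdβ j hj).2 ▸ (Ordinal.sub_le_self _ _).trans (hd.le_top (add_one_le_iff.2 hj))
    rw [extendAlong_of_ne (hεδ.trans_lt hδμ.2).ne]
    exact hb j hj

theorem exists_prod_eq_extendAlong
    (hμ : ℵ₀ ≤ μ) (hP : DomExactly P (fun δ => 0 < δ ∧ δ < μ.ord))
    (hcs : IsTiling μ.ord κ cs) (hκ : IsSuccLimit κ) (hκμ : κ < μ.ord) :
    ∃ Q : PartialOrdinalSemigroup S, Q.prod = P.extendAlong μ.ord κ cs := by
  have hM : IsSuccLimit μ.ord := Cardinal.isSuccLimit_ord hμ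
  refine ⟨⟨P.extendAlong μ.ord κ cs, fun δ a b hab => ?_, fun a => ?_,
    extendAlong_ord hμ hP hcs hκ hκμ⟩, rfl⟩
  · by_cases hδ : δ = μ.ord
    · subst hδ
      simp only [extendAlong_self]
      exact P.congr _ _ _ fun j hj => pieceProd_congr hcs.isNormal.strictMono fun i hi =>
        hab i (hi.trans_le (hcs.le_top (add_one_le_iff.2 hj)))
    · simp only [extendAlong_of_ne hδ]
      exact P.congr _ _ _ hab
  · rw [extendAlong_of_ne (Ordinal.one_lt_of_isSuccLimit hM).ne]
    exact P.unary a

theorem prod_eq_extendAlong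
    (hμ : ℵ₀ ≤ μ) (hP : DomExactly P (fun δ => 0 < δ ∧ δ < μ.ord))
    (hcs : IsTiling μ.ord κ cs) (hκ : IsSuccLimit κ) (hκμ : κ < μ.ord)
    {Q : PartialOrdinalSemigroup S}
    (hQ : DomExactly Q (fun δ => 0 < δ ∧ δ ≤ μ.ord)) (hQP : Extends Q P) :
    Q.prod = P.extendAlong μ.ord κ cs := by
  funext δ a
  by_cases hδ : δ = μ.ord
  · subst hδ
    obtain ⟨s, hs⟩ := Option.isSome_iff_exists.1
      ((hQ _ a).2 ⟨(Cardinal.isSuccLimit_ord hμ).bot_lt, le_rfl⟩)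
    rw [hs, extendAlong_self, prod_pieceProd_of_extends hP hQP hcs hκ hκμ hs]
  · rw [extendAlong_of_ne hδ]
    rcases hPδ : P.prod δ a with _ | s
    · rw [← Option.not_isSome_iff_eq_none, hQ]
      rintro ⟨h0, hle⟩
      simpa [hPδ] using (hP δ a).2 ⟨h0, lt_of_le_of_ne hle hδ⟩
    · exact hQP _ _ _ hPδ

variable (P) in
theorem existsUnique_extends
    (hμ : ℵ₀ ≤ μ) (hP : DomExactly P (fun δ => 0 < δ ∧ δ < μ.ord))
    (hcs : IsTiling μ.ord κ cs) (hκ : IsSuccLimit κ) (hκμ : κ < μ.ord) :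
    ∃! Q : PartialOrdinalSemigroup S, DomExactly Q (fun δ => 0 < δ ∧ δ ≤ μ.ord) ∧ Extends Q P := by
  obtain ⟨Q, hQ⟩ := exists_prod_eq_extendAlong hμ hP hcs hκ hκμ
  exact ⟨Q, ⟨fun δ a => hQ ▸ extendAlong_isSome_iff hP hκ.bot_lt hκμ a, extends_extendAlong hP hQ⟩,
    fun Q' hQ' => ext ((prod_eq_extendAlong hμ hP hcs hκ hκμ hQ'.1 hQ'.2).trans hQ.symm)⟩

end Extension

variable (P) in
theorem exists_prod_pieces_of_cofinal {M η : Ordinal.{u}} {Q : PartialOrdinalSemigroup S}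
    (hP : DomExactly P (fun δ => 0 < δ ∧ δ < M)) (hQ : Extends Q P) (hM : IsSuccLimit M)
    (hη : IsSuccLimit η) (hηM : η < M) {β : Ordinal.{u} → Ordinal.{u}}
    (hmono : ∀ j < η, ∀ k < η, j < k → β j < β k)
    (hcont : ∀ j < η, IsSuccLimit j → β j = sSup (β '' Iio j)) (hlt : ∀ j < η, β j < M)
    (hcof : ∀ x < M, ∃ j < η, x ≤ β j) (h0 : β 0 = 0) {a : Ordinal.{u} → S} {s : S}
    (hs : Q.prod M a = some s) :
    ∃ b : Ordinal.{u} → S,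
      (∀ j < η, P.prod (β (j + 1) - β j) (fun γ => a (β j + γ)) = some (b j)) ∧
        P.prod η b = some s := by
  have hc := isTiling_of_cofinal hM hη hmono hcont hlt hcof h0
  refine ⟨P.pieceProd _ a, fun j hj => ?_, prod_pieceProd_of_extends hP hQ hc hη hηM hs⟩
  have hj1 := hη.add_one_lt hj
  simpa only [if_pos hj, if_pos hj1] using
    prod_piece_eq_some (j := j) (a := a) hP hc.isNormal.strictMono (hc.lt_top hj1)

end PartialOrdinalSemigroup

/-- If `μ` is a singular cardinal, every `<μ`-semigroup expands uniquely to a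
`≤μ`-semigroup; moreover in any such expansion the product of a `μ`-indexed sequence is
computed, via any strictly increasing continuous cofinal sequence `(β j)_{j < cf μ}` in
`μ` with `β 0 = 0`, as `Π_{j<cf μ} Π_{i ∈ [β j, β (j+1))} a i` (so the value is
independent of the chosen cofinal sequence). -/
theorem singular_extension {S : Type u} (μ : Cardinal.{u}) (hμ : ℵ₀ ≤ μ)
    (hsing : μ.ord.cof < μ) (P : PartialOrdinalSemigroup S)
    (hP : DomExactly P (fun δ => 0 < δ ∧ δ < μ.ord)) :
    (∃! Q : PartialOrdinalSemigroup S,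
      DomExactly Q (fun δ => 0 < δ ∧ δ ≤ μ.ord) ∧ Extends Q P) ∧
    (∀ Q : PartialOrdinalSemigroup S,
      DomExactly Q (fun δ => 0 < δ ∧ δ ≤ μ.ord) → Extends Q P →
      ∀ β : Ordinal.{u} → Ordinal.{u},
        (∀ j < μ.ord.cof.ord, ∀ k < μ.ord.cof.ord, j < k → β j < β k) →
        (∀ j < μ.ord.cof.ord, Order.IsSuccLimit j → β j = sSup (β '' Set.Iio j)) →
        (∀ j < μ.ord.cof.ord, β j < μ.ord) →
        (∀ x < μ.ord, ∃ j < μ.ord.cof.ord, x ≤ β j) →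
        β 0 = 0 →
        ∀ (a : Ordinal.{u} → S) (s : S), Q.prod μ.ord a = some s →
          ∃ b : Ordinal.{u} → S,
            (∀ j < μ.ord.cof.ord,
              P.prod (β (j + 1) - β j) (fun γ => a (β j + γ)) = some (b j)) ∧
            P.prod μ.ord.cof.ord b = some s) := by
  have hM : IsSuccLimit μ.ord := Cardinal.isSuccLimit_ord hμ
  have hκ : IsSuccLimit μ.ord.cof.ord :=
    Cardinal.isSuccLimit_ord (Ordinal.aleph0_le_cof_iff.2 (Ordinal.one_lt_cof_iff.2 hM))
  have hκμ : μ.ord.cof.ord < μ.ord := Cardinal.ord_lt_ord.2 hsing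
  obtain ⟨cs, hcs⟩ := exists_isTiling_cof_ord μ.ord
  exact ⟨P.existsUnique_extends hμ hP hcs hκ hκμ,
    fun _ _ hQP _ hmono hcont hlt hcof hβ0 _ _ hs =>
      P.exists_prod_pieces_of_cofinal hP hQP hM hκ hκμ hmono hcont hlt hcof hβ0 hs⟩
end
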